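/- arXiv:2510.10088 — 2 statements merged into one kernel-verified Lean document; each statement's English description precedes it below -/
import Mathlib

section
/- Let r ≥ 2 be an integer and let x > 0. Then lim_{s→1⁺} [ Σ_{m=1}^∞ ζ(s, mx+1)/m^r − ζ(r)/(s−1) ] = − Σ_{m=1}^∞ ψ(mx+1)/m^r, the limit being over real s > 1. -/
open Real Filter Topology Finset

noncomputable def hzeta (s a : ℝ) : ℝ := ∑' n : ℕ, 1 / ((n : ℝ) + a) ^ s

noncomputable def zetaR (s : ℝ) : ℝ := ∑' n : ℕ+, 1 / (n : ℝ) ^ s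

noncomputable def psi (y : ℝ) : ℝ := deriv Real.Gamma y / Real.Gamma y

/-!
The recurrence `ψ(y + 1) = ψ(y) + 1/y` and the monotonicity of `ψ` (log-convexity of `Γ`)
give `ψ(a + n) - H_n → -γ`, hence `ψ(a) + γ = Σₙ (1/(n+1) - 1/(n+a))` for `a ≥ 1`.
Since `(n+1)^{-s} - (n+a)^{-s} ≤ 2 (1/(n+1) - 1/(n+a))` for `s ∈ [1, 2]`, dominated
convergence gives `ζ(s, a) - ζ(s, 1) → -(ψ(a) + γ)` as `s → 1⁺`, together with the uniform
bound `|ζ(s, a) - ζ(s, 1)| ≤ 2 (ψ(a) + γ)`. Now split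
`ζ(s, mx+1) = (ζ(s, mx+1) - ζ(s, 1)) + ζ(s, 1)`: the second part contributes
`(ζ(s, 1) - 1/(s-1)) ζ(r) → γ ζ(r)`, and the first part converges by dominated convergence
in `m`, because `ψ(a) + γ ≤ 1 + log a` makes `Σₘ (ψ(mx+1) + γ)/m^r` converge.
-/

local notation "γ" => Real.eulerMascheroniConstant

lemma differentiableAt_Gamma_of_pos {y : ℝ} (hy : 0 < y) : DifferentiableAt ℝ Gamma y :=
  differentiableAt_Gamma fun m ↦ by linarith [m.cast_nonneg (α := ℝ)]

lemma differentiableAt_log_comp_Gamma {y : ℝ} (hy : 0 < y) :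
    DifferentiableAt ℝ (log ∘ Gamma) y :=
  (differentiableAt_Gamma_of_pos hy).log (Gamma_pos_of_pos hy).ne'

lemma psi_eq_deriv_log_comp_Gamma {y : ℝ} (hy : 0 < y) : psi y = deriv (log ∘ Gamma) y := by
  rw [Function.comp_def, deriv.log (differentiableAt_Gamma_of_pos hy) (Gamma_pos_of_pos hy).ne',
    psi]

lemma psi_add_one {y : ℝ} (hy : 0 < y) : psi (y + 1) = psi y + 1 / y := by
  rw [psi_eq_deriv_log_comp_Gamma (by positivity), psi_eq_deriv_log_comp_Gamma hy,
    ← deriv_comp_add_const, one_div, ← deriv_log,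
    ← deriv_add (differentiableAt_log_comp_Gamma hy) (differentiableAt_log hy.ne')]
  apply EventuallyEq.deriv_eq
  filter_upwards [eventually_gt_nhds hy] with t ht
  simp only [Function.comp_apply, Gamma_add_one ht.ne',
    log_mul ht.ne' (Gamma_pos_of_pos ht).ne', add_comm, Pi.add_apply]

lemma psi_natCast_add_one (n : ℕ) : psi (n + 1) = -γ + harmonic n := by
  rw [psi, deriv_Gamma_nat n, Gamma_nat_eq_factorial]
  field_simp

lemma monotoneOn_psi : MonotoneOn psi (Set.Ioi 0) := by
  intro a ha b hb hab
  rw [psi_eq_deriv_log_comp_Gamma ha, psi_eq_deriv_log_comp_Gamma hb]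
  exact convexOn_log_Gamma.monotoneOn_deriv (fun y hy ↦ differentiableAt_log_comp_Gamma hy)
    ha hb hab

lemma psi_add_natCast {a : ℝ} (ha : 0 < a) (n : ℕ) :
    psi (a + n) = psi a + ∑ j ∈ range n, 1 / (a + j) := by
  induction n with
  | zero => simp
  | succ n ih =>
    rw [Nat.cast_succ, ← add_assoc, psi_add_one (by positivity), ih, sum_range_succ, add_assoc]

lemma tendsto_harmonic_add_sub_harmonic (k : ℕ) :
    Tendsto (fun n : ℕ ↦ (harmonic (n + k) : ℝ) - harmonic n) atTop (𝓝 0) := by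
  induction k with
  | zero => simp
  | succ k ih =>
    have hlast : Tendsto (fun n : ℕ ↦ ((n + (k + 1) : ℕ) : ℝ)⁻¹) atTop (𝓝 0) :=
      tendsto_inv_atTop_zero.comp (tendsto_natCast_atTop_atTop.comp (tendsto_add_atTop_nat _))
    refine (zero_add (0 : ℝ) ▸ ih.add hlast).congr fun n ↦ ?_
    rw [← add_assoc, harmonic_succ]
    push_cast
    ring

lemma tendsto_psi_add_natCast_sub_harmonic {a : ℝ} (ha : 0 < a) :
    Tendsto (fun n : ℕ ↦ psi (a + n) - harmonic n) atTop (𝓝 (-γ)) := by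
  rw [← tendsto_add_atTop_iff_nat 1]
  set N := ⌊a⌋₊
  have hlower : Tendsto (fun n : ℕ ↦ -γ - ((harmonic (n + 1) : ℝ) - harmonic n)) atTop
      (𝓝 (-γ)) := by
    simpa using (tendsto_harmonic_add_sub_harmonic 1).const_sub (-γ)
  have hupper : Tendsto (fun n : ℕ ↦ -γ + ((harmonic (n + 1 + N) : ℝ) - harmonic (n + 1)))
      atTop (𝓝 (-γ)) := by
    simpa using
      ((tendsto_harmonic_add_sub_harmonic N).comp (tendsto_add_atTop_nat 1)).const_add (-γ)
  refine tendsto_of_tendsto_of_tendsto_of_le_of_le hlower hupper (fun n ↦ ?_) (fun n ↦ ?_)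
  · have := monotoneOn_psi (by positivity : (0 : ℝ) < n + 1)
      (by positivity : 0 < a + (n + 1 : ℕ)) (by push_cast; linarith)
    rw [psi_natCast_add_one] at this
    linarith
  · have := monotoneOn_psi (by positivity : 0 < a + (n + 1 : ℕ))
      (by positivity : (0 : ℝ) < (n + 1 + N : ℕ) + 1)
      (by push_cast; linarith [Nat.lt_floor_add_one a])
    rw [psi_natCast_add_one] at this
    linarith

lemma hasSum_psi {a : ℝ} (ha : 1 ≤ a) :
    HasSum (fun j : ℕ ↦ 1 / ((j : ℝ) + 1) - 1 / (j + a)) (psi a + γ) := by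
  have hnonneg (j : ℕ) : 0 ≤ 1 / ((j : ℝ) + 1) - 1 / (j + a) :=
    sub_nonneg.mpr (one_div_le_one_div_of_le (by positivity) (by linarith))
  have hpartial (n : ℕ) : ∑ j ∈ range n, (1 / ((j : ℝ) + 1) - 1 / (j + a))
      = psi a - (psi (a + n) - harmonic n) := by
    rw [psi_add_natCast (by linarith), sum_sub_distrib, harmonic]
    push_cast
    simp only [one_div, add_comm a]
    ring
  rw [hasSum_iff_tendsto_nat_of_nonneg hnonneg, ← sub_neg_eq_add]
  exact ((tendsto_psi_add_natCast_sub_harmonic (by linarith)).const_sub (psi a)).congr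
    fun n ↦ (hpartial n).symm

lemma psi_add_eulerMascheroniConstant_nonneg {a : ℝ} (ha : 1 ≤ a) : 0 ≤ psi a + γ :=
  (hasSum_psi ha).nonneg fun _ ↦
    sub_nonneg.mpr (one_div_le_one_div_of_le (by positivity) (by linarith))

lemma psi_add_eulerMascheroniConstant_le {a : ℝ} (ha : 1 ≤ a) : psi a + γ ≤ 1 + log a := by
  have := monotoneOn_psi (by positivity : 0 < a) (by positivity : (0 : ℝ) < ⌊a⌋₊ + 1)
    (Nat.lt_floor_add_one a).le
  rw [psi_natCast_add_one] at this
  linarith [harmonic_floor_le_one_add_log a ha]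

lemma summable_one_div_add_rpow {s a : ℝ} (hs : 1 < s) (ha : 0 < a) :
    Summable (fun n : ℕ ↦ 1 / ((n : ℝ) + a) ^ s) := by
  refine ((summable_one_div_nat_add_rpow a s).mpr hs).congr fun n ↦ ?_
  rw [abs_of_pos (by positivity)]

lemma hzeta_sub_hzeta_one {s a : ℝ} (hs : 1 < s) (ha : 0 < a) :
    hzeta s a - hzeta s 1 = ∑' n : ℕ, (1 / ((n : ℝ) + a) ^ s - 1 / ((n : ℝ) + 1) ^ s) :=
  ((summable_one_div_add_rpow hs ha).tsum_sub (summable_one_div_add_rpow hs one_pos)).symm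

lemma one_div_rpow_sub_one_div_rpow_le {u v s : ℝ} (hu : 1 ≤ u) (huv : u ≤ v) (hs₁ : 1 ≤ s)
    (hs₂ : s ≤ 2) : 1 / u ^ s - 1 / v ^ s ≤ 2 * (1 / u - 1 / v) := by
  have hu₀ : 0 < u := by linarith
  have hv₀ : 0 < v := by linarith
  set t := u / v
  have ht₀ : 0 < t := by positivity
  have ht₁ : t ≤ 1 := (div_le_one hv₀).mpr huv
  -- With `t = u / v`, the difference is `u ^ (-s) * (1 - t ^ s)` and `t ^ s ≥ t ^ 2`.
  have hts : t ^ (2 : ℝ) ≤ t ^ s := rpow_le_rpow_of_exponent_ge ht₀ ht₁ hs₂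
  rw [rpow_two] at hts
  calc 1 / u ^ s - 1 / v ^ s = 1 / u ^ s * (1 - t ^ s) := by
        rw [div_rpow hu₀.le hv₀.le]; field_simp
    _ ≤ 1 / u * (2 * (1 - t)) := by
        gcongr
        · exact sub_nonneg.mpr (rpow_le_one ht₀.le ht₁ (by linarith))
        · simpa using rpow_le_rpow_of_exponent_le hu hs₁
        · nlinarith
    _ = 2 * (1 / u - 1 / v) := by simp only [t]; field_simp

lemma abs_one_div_add_rpow_sub_le {a s : ℝ} (ha : 1 ≤ a) (hs₁ : 1 ≤ s) (hs₂ : s ≤ 2) (n : ℕ) :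
    |1 / ((n : ℝ) + a) ^ s - 1 / ((n : ℝ) + 1) ^ s| ≤ 2 * (1 / ((n : ℝ) + 1) - 1 / (n + a)) := by
  have hle : (n : ℝ) + 1 ≤ n + a := by linarith
  rw [abs_sub_comm, abs_of_nonneg (sub_nonneg.mpr (one_div_le_one_div_of_le (by positivity)
    (rpow_le_rpow (by positivity) hle (by linarith))))]
  exact one_div_rpow_sub_one_div_rpow_le (by linarith [n.cast_nonneg (α := ℝ)]) hle hs₁ hs₂

lemma abs_hzeta_sub_hzeta_one_le {a s : ℝ} (ha : 1 ≤ a) (hs₁ : 1 < s) (hs₂ : s ≤ 2) :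
    |hzeta s a - hzeta s 1| ≤ 2 * (psi a + γ) := by
  rw [hzeta_sub_hzeta_one hs₁ (by linarith)]
  exact tsum_of_norm_bounded ((hasSum_psi ha).mul_left 2)
    fun n ↦ (norm_eq_abs _).trans_le (abs_one_div_add_rpow_sub_le ha hs₁.le hs₂ n)

lemma tendsto_hzeta_sub_hzeta_one {a : ℝ} (ha : 1 ≤ a) :
    Tendsto (fun s ↦ hzeta s a - hzeta s 1) (𝓝[>] 1) (𝓝 (-(psi a + γ))) := by
  have hpow {b : ℝ} (hb : 0 < b) : Tendsto (fun s : ℝ ↦ 1 / b ^ s) (𝓝[>] 1) (𝓝 (1 / b)) := by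
    simpa using ((continuousAt_const_rpow hb.ne').tendsto.inv₀
      (rpow_pos_of_pos hb 1).ne').mono_left nhdsWithin_le_nhds
  have hlim (n : ℕ) : Tendsto (fun s : ℝ ↦ 1 / ((n : ℝ) + a) ^ s - 1 / ((n : ℝ) + 1) ^ s)
      (𝓝[>] 1) (𝓝 (-(1 / ((n : ℝ) + 1) - 1 / (n + a)))) := by
    rw [neg_sub]
    exact (hpow (by positivity)).sub (hpow (by positivity))
  have hdom : ∀ᶠ s : ℝ in 𝓝[>] 1, ∀ n : ℕ,
      ‖1 / ((n : ℝ) + a) ^ s - 1 / ((n : ℝ) + 1) ^ s‖ ≤ 2 * (1 / ((n : ℝ) + 1) - 1 / (n + a)) := by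
    filter_upwards [Ioo_mem_nhdsGT one_lt_two] with s hs
    exact abs_one_div_add_rpow_sub_le ha hs.1.le hs.2.le
  have := tendsto_tsum_of_dominated_convergence ((hasSum_psi ha).mul_left 2).summable hlim hdom
  rw [tsum_neg, (hasSum_psi ha).tsum_eq] at this
  refine this.congr' ?_
  filter_upwards [self_mem_nhdsWithin] with s hs
  exact (hzeta_sub_hzeta_one hs (by linarith)).symm

lemma tendsto_hzeta_one_sub_one_div :
    Tendsto (fun s ↦ hzeta s 1 - 1 / (s - 1)) (𝓝[>] 1) (𝓝 γ) := by
  have hre := (Complex.continuous_re.tendsto _).comp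
    ZetaAsymptotics.tendsto_riemannZeta_sub_one_div_nhds_right
  rw [Complex.ofReal_re] at hre
  refine hre.congr' ?_
  filter_upwards [self_mem_nhdsWithin] with s (hs : 1 < s)
  rw [Function.comp_apply, zeta_eq_tsum_one_div_nat_add_one_cpow (by simpa using hs), hzeta]
  have hterm (n : ℕ) : 1 / ((n : ℂ) + 1) ^ (s : ℂ) = ((1 / ((n : ℝ) + 1) ^ s : ℝ) : ℂ) := by
    rw [Complex.ofReal_div, Complex.ofReal_cpow (by positivity)]
    push_cast
    rfl
  simp_rw [hterm, ← Complex.ofReal_tsum]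
  norm_cast

section WeightedSum

variable {ι : Type*} {a w : ι → ℝ}

lemma summable_hzeta_sub_hzeta_one_mul (ha : ∀ i, 1 ≤ a i) (hw : ∀ i, 0 ≤ w i)
    (hψ : Summable fun i ↦ (psi (a i) + γ) * w i) {s : ℝ} (hs₁ : 1 < s) (hs₂ : s ≤ 2) :
    Summable fun i ↦ (hzeta s (a i) - hzeta s 1) * w i := by
  refine (hψ.mul_left 2).of_norm_bounded fun i ↦ ?_
  rw [norm_mul, norm_of_nonneg (hw i), ← mul_assoc]
  exact mul_le_mul_of_nonneg_right (abs_hzeta_sub_hzeta_one_le (ha i) hs₁ hs₂) (hw i)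

lemma tendsto_tsum_hzeta_sub_hzeta_one_mul (ha : ∀ i, 1 ≤ a i) (hw : ∀ i, 0 ≤ w i)
    (hψ : Summable fun i ↦ (psi (a i) + γ) * w i) :
    Tendsto (fun s ↦ ∑' i, (hzeta s (a i) - hzeta s 1) * w i) (𝓝[>] 1)
      (𝓝 (∑' i, -(psi (a i) + γ) * w i)) := by
  refine tendsto_tsum_of_dominated_convergence (hψ.mul_left 2)
    (fun i ↦ (tendsto_hzeta_sub_hzeta_one (ha i)).mul_const _) ?_
  filter_upwards [Ioo_mem_nhdsGT one_lt_two] with s hs i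
  rw [norm_mul, norm_of_nonneg (hw i), ← mul_assoc]
  exact mul_le_mul_of_nonneg_right (abs_hzeta_sub_hzeta_one_le (ha i) hs.1 hs.2.le) (hw i)

theorem tendsto_tsum_hzeta_mul_sub_tsum_div (ha : ∀ i, 1 ≤ a i) (hw : ∀ i, 0 ≤ w i)
    (hw_sum : Summable w) (hψ : Summable fun i ↦ (psi (a i) + γ) * w i) :
    Tendsto (fun s ↦ ∑' i, hzeta s (a i) * w i - (∑' i, w i) / (s - 1)) (𝓝[>] 1)
      (𝓝 (-∑' i, psi (a i) * w i)) := by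
  have hψw : Summable fun i ↦ psi (a i) * w i :=
    (hψ.sub (hw_sum.mul_left γ)).congr fun i ↦ by ring
  have hval : ∑' i, -(psi (a i) + γ) * w i + γ * ∑' i, w i = -∑' i, psi (a i) * w i := by
    simp_rw [neg_mul, add_mul, tsum_neg, hψw.tsum_add (hw_sum.mul_left γ), tsum_mul_left]
    ring
  have hlim := (tendsto_tsum_hzeta_sub_hzeta_one_mul ha hw hψ).add
    (tendsto_hzeta_one_sub_one_div.mul_const (∑' i, w i))
  rw [hval] at hlim
  refine hlim.congr' ?_
  filter_upwards [Ioo_mem_nhdsGT one_lt_two] with s hs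
  have hsplit : ∑' i, hzeta s (a i) * w i
      = ∑' i, (hzeta s (a i) - hzeta s 1) * w i + ∑' i, hzeta s 1 * w i := by
    rw [← (summable_hzeta_sub_hzeta_one_mul ha hw hψ hs.1 hs.2.le).tsum_add
      (hw_sum.mul_left _)]
    exact tsum_congr fun i ↦ by ring
  rw [hsplit, tsum_mul_left]
  ring

end WeightedSum

lemma summable_psi_add_eulerMascheroniConstant_mul_inv_pow {r : ℕ} (hr : 2 ≤ r) {x : ℝ}
    (hx : 0 ≤ x) : Summable fun m : ℕ+ ↦ (psi (m * x + 1) + γ) * ((m : ℝ) ^ r)⁻¹ := by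
  have hbound : Summable fun m : ℕ+ ↦ 3 * (x + 1) ^ (1 / 2 : ℝ) * (m : ℝ) ^ (-(3 / 2) : ℝ) :=
    (summable_pnat_iff_summable_nat.mpr (summable_nat_rpow.mpr (by norm_num))).mul_left _
  have ha (m : ℕ+) : 1 ≤ (m : ℝ) * x + 1 :=
    le_add_of_nonneg_left (by positivity)
  refine hbound.of_nonneg_of_le
    (fun m ↦ mul_nonneg (psi_add_eulerMascheroniConstant_nonneg (ha m)) (by positivity))
    (fun m ↦ ?_)
  have hm : (1 : ℝ) ≤ m := Nat.one_le_cast.mpr m.pos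
  -- `log` is dominated by `√`, and `r ≥ 2` leaves the summable exponent `-3/2`.
  have hlog : 1 + log (m * x + 1) ≤ 3 * ((m : ℝ) * x + 1) ^ (1 / 2 : ℝ) := by
    have := log_le_rpow_div (by positivity : (0 : ℝ) ≤ m * x + 1) (by norm_num : (0 : ℝ) < 1 / 2)
    linarith [one_le_rpow (ha m) (by norm_num : (0 : ℝ) ≤ 1 / 2)]
  calc (psi (m * x + 1) + γ) * ((m : ℝ) ^ r)⁻¹
      ≤ 3 * ((m : ℝ) * x + 1) ^ (1 / 2 : ℝ) * ((m : ℝ) ^ 2)⁻¹ := by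
        gcongr
        exact (psi_add_eulerMascheroniConstant_le (ha m)).trans hlog
    _ ≤ 3 * ((x + 1) * m) ^ (1 / 2 : ℝ) * ((m : ℝ) ^ 2)⁻¹ := by gcongr; nlinarith
    _ = 3 * (x + 1) ^ (1 / 2 : ℝ) * ((m : ℝ) ^ (1 / 2 : ℝ) * ((m : ℝ) ^ 2)⁻¹) := by
        rw [mul_rpow (by positivity) (by positivity)]
        ring
    _ = 3 * (x + 1) ^ (1 / 2 : ℝ) * (m : ℝ) ^ (-(3 / 2) : ℝ) := by
        rw [← rpow_natCast, ← rpow_neg (by positivity), ← rpow_add (by positivity)]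
        norm_num

theorem stmt14 (r : ℕ) (hr : 2 ≤ r) (x : ℝ) (hx : 0 < x) :
    Tendsto
      (fun s : ℝ => (∑' m : ℕ+, hzeta s ((m : ℝ) * x + 1) / (m : ℝ) ^ r) - zetaR r / (s - 1))
      (𝓝[>] 1)
      (𝓝 (-∑' m : ℕ+, psi ((m : ℝ) * x + 1) / (m : ℝ) ^ r)) := by
  have hw_sum : Summable fun m : ℕ+ ↦ ((m : ℝ) ^ r)⁻¹ :=
    summable_pnat_iff_summable_nat.mpr (summable_nat_pow_inv.mpr (by omega))
  have hzetaR : zetaR r = ∑' m : ℕ+, ((m : ℝ) ^ r)⁻¹ := by simp [zetaR]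
  have ha (m : ℕ+) : 1 ≤ (m : ℝ) * x + 1 :=
    le_add_of_nonneg_left (by positivity)
  simpa only [div_eq_mul_inv, hzetaR] using
    tendsto_tsum_hzeta_mul_sub_tsum_div ha (fun m ↦ by positivity) hw_sum
      (summable_psi_add_eulerMascheroniConstant_mul_inv_pow hr hx.le)
end

section
/- Let r ≥ 2 be an integer, let x > 0, and let t be real with t > 1−r. Then Θ(r,r,t,x) = Θ(0,r,t+r,x) + Σ_{ℓ=1}^{r−1} binom(r,ℓ) x^ℓ Θ(ℓ, r−ℓ, t+r, x) + x^{−t} Θ(0,r,t+r,1/x). -/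
/-!
Writing `(n + m x)^t = (n + m x)^(t + r) / (n + m x)^r` and expanding `(n + m x)^r`
binomially splits each term of `Θ(r, r, t, x)` into the terms
`binom(r, ℓ) x^ℓ / (n^ℓ m^(r-ℓ) (n + m x)^(t + r))`, `0 ≤ ℓ ≤ r`. Each of these double
series converges absolutely, so `Θ(r, r, t, x)` splits accordingly. The `ℓ = r` series is
turned into `x^(-t) Θ(0, r, t + r, 1/x)` by `n + m x = x (m + n / x)` and exchanging `n` and `m`.
-/

open Real Filter Topology Finset

noncomputable def Theta (r s t x : ℝ) : ℝ :=
  ∑' n : ℕ+, ∑' m : ℕ+, 1 / ((n : ℝ) ^ r * (m : ℝ) ^ s * ((n : ℝ) + (m : ℝ) * x) ^ t)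

noncomputable def thetaTerm (p q c y : ℝ) (nm : ℕ+ × ℕ+) : ℝ :=
  1 / ((nm.1 : ℝ) ^ p * (nm.2 : ℝ) ^ q * ((nm.1 : ℝ) + (nm.2 : ℝ) * y) ^ c)

section Summability

variable {p q c y : ℝ}

lemma summable_one_div_pnat_rpow {s : ℝ} (hs : 1 < s) :
    Summable fun n : ℕ+ => 1 / (n : ℝ) ^ s :=
  (summable_one_div_nat_rpow.mpr hs).comp_injective PNat.coe_injective

/-- Comparison with a product of two `p`-series via `(n + m y)^c ≥ n^a (m y)^b`. -/
lemma summable_thetaTerm_of_le_add {a b : ℝ} (hy : 0 < y) (ha : 0 ≤ a) (hb : 0 ≤ b)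
    (habc : a + b ≤ c) (hpa : 1 < p + a) (hqb : 1 < q + b) :
    Summable (thetaTerm p q c y) := by
  have hprod : Summable fun nm : ℕ+ × ℕ+ =>
      1 / (nm.1 : ℝ) ^ (p + a) * (1 / y ^ b * (1 / (nm.2 : ℝ) ^ (q + b))) :=
    (summable_one_div_pnat_rpow hpa).mul_of_nonneg
      ((summable_one_div_pnat_rpow hqb).mul_left _) (fun _ => by positivity)
      (fun _ => by positivity)
  refine hprod.of_nonneg_of_le (fun _ => by unfold thetaTerm; positivity) fun ⟨n, m⟩ => ?_
  have hn : (0 : ℝ) < n := by exact_mod_cast n.pos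
  have hm : (0 : ℝ) < m := by exact_mod_cast m.pos
  set D : ℝ := n + m * y
  have hD1 : 1 ≤ D := by
    have : (1 : ℝ) ≤ n := by exact_mod_cast n.pos
    nlinarith [mul_pos hm hy]
  have key : (n : ℝ) ^ a * (m * y) ^ b ≤ D ^ c :=
    calc (n : ℝ) ^ a * (m * y) ^ b ≤ D ^ a * D ^ b := by
          gcongr
          · linarith [mul_pos hm hy]
          · linarith
      _ = D ^ (a + b) := (rpow_add (by linarith) a b).symm
      _ ≤ D ^ c := rpow_le_rpow_of_exponent_le hD1 habc
  have hrhs : 1 / (n : ℝ) ^ (p + a) * (1 / y ^ b * (1 / (m : ℝ) ^ (q + b)))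
      = 1 / ((n : ℝ) ^ p * (m : ℝ) ^ q * ((n : ℝ) ^ a * (m * y) ^ b)) := by
    rw [rpow_add hn, rpow_add hm, mul_rpow hm.le hy.le]
    field_simp
  rw [hrhs, thetaTerm]
  gcongr

/-- Split `c = a + (c - a)` with `a` the midpoint of `(1 - p, c + q - 1)`, clamped to `[0, c]`. -/
theorem summable_thetaTerm (hy : 0 < y) (hc : 0 ≤ c) (hp : 1 < p + c) (hq : 1 < q + c)
    (hpq : 2 < p + q + c) : Summable (thetaTerm p q c y) := by
  set a := max 0 (min c ((c + q - p) / 2))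
  refine summable_thetaTerm_of_le_add (a := a) (b := c - a) hy (le_max_left _ _)
    (sub_nonneg.mpr (max_le hc (min_le_left _ _))) (by linarith) ?_ ?_ <;>
  · rcases max_cases 0 (min c ((c + q - p) / 2)) with h | h <;>
    rcases min_cases c ((c + q - p) / 2) with h' | h' <;>
    linarith

end Summability

section Identities

variable {p q c y : ℝ}

lemma hasSum_thetaTerm (h : Summable (thetaTerm p q c y)) :
    HasSum (thetaTerm p q c y) (Theta p q c y) := by
  have := h.hasSum
  rwa [h.tsum_prod] at this

lemma thetaTerm_swap (hy : 0 < y) (nm : ℕ+ × ℕ+) :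
    thetaTerm q p c (1 / y) nm.swap = y ^ c * thetaTerm p q c y nm := by
  obtain ⟨n, m⟩ := nm
  have hn : (0 : ℝ) < n := by exact_mod_cast n.pos
  have hm : (0 : ℝ) < m := by exact_mod_cast m.pos
  have hfac : (n : ℝ) + m * y = y * (m + n * (1 / y)) := by field_simp; ring
  have hz : (0 : ℝ) ≤ m + n * (1 / y) := by positivity
  simp only [thetaTerm, Prod.swap_prod_mk, hfac, mul_rpow hy.le hz]
  have : 0 < y ^ c := rpow_pos_of_pos hy c
  field_simp

theorem Theta_swap (hy : 0 < y) (h : Summable (thetaTerm p q c y)) :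
    Theta q p c (1 / y) = y ^ c * Theta p q c y := by
  have hswap : HasSum (thetaTerm q p c (1 / y) ∘ Equiv.prodComm ℕ+ ℕ+)
      (y ^ c * Theta p q c y) :=
    ((hasSum_thetaTerm h).mul_left (y ^ c)).congr_fun (thetaTerm_swap hy)
  have hsum := (Equiv.prodComm ℕ+ ℕ+).hasSum_iff.mp hswap
  exact (hasSum_thetaTerm hsum.summable).unique hsum

lemma thetaTerm_eq_sum_choose (r : ℕ) (t : ℝ) (hy : 0 < y) (nm : ℕ+ × ℕ+) :
    thetaTerm r r t y nm =
      ∑ ℓ ∈ range (r + 1),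
        (r.choose ℓ : ℝ) * y ^ ℓ * thetaTerm ℓ ((r : ℝ) - ℓ) (t + r) y nm := by
  obtain ⟨n, m⟩ := nm
  have hn : (0 : ℝ) < n := by exact_mod_cast n.pos
  have hm : (0 : ℝ) < m := by exact_mod_cast m.pos
  set D : ℝ := n + m * y
  have hD : 0 < D := by positivity
  have hDt : D ^ t = D ^ (t + r) / D ^ r := by
    rw [rpow_add hD, rpow_natCast]
    field_simp
  have hexpand : thetaTerm r r t y (n, m) =
      (∑ ℓ ∈ range (r + 1), (m * y) ^ ℓ * (n : ℝ) ^ (r - ℓ) * r.choose ℓ)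
        * (1 / ((n : ℝ) ^ r * (m : ℝ) ^ r * D ^ (t + r))) := by
    change 1 / ((n : ℝ) ^ (r : ℝ) * (m : ℝ) ^ (r : ℝ) * D ^ t) = _
    rw [← add_pow, add_comm, hDt, rpow_natCast, rpow_natCast]
    field_simp
    rfl
  rw [hexpand, sum_mul]
  refine sum_congr rfl fun ℓ hℓ => ?_
  have hℓr : ℓ ≤ r := Nat.lt_succ_iff.mp (mem_range.mp hℓ)
  rw [thetaTerm, rpow_natCast, rpow_sub hm, rpow_natCast, rpow_natCast, pow_sub₀ _ hn.ne' hℓr]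
  field_simp
  ring

end Identities

theorem Theta_eq_sum_choose {x t : ℝ} (r : ℕ) (hr : 1 ≤ r) (hx : 0 < x)
    (ht : 1 - (r : ℝ) < t) :
    Theta r r t x =
      ∑ ℓ ∈ range (r + 1),
        (r.choose ℓ : ℝ) * x ^ ℓ * Theta ℓ ((r : ℝ) - ℓ) (t + r) x := by
  have hr' : (1 : ℝ) ≤ r := by exact_mod_cast hr
  have hterm : ∀ ℓ ∈ range (r + 1), Summable (thetaTerm ℓ ((r : ℝ) - ℓ) (t + r) x) := by
    intro ℓ hℓ
    have : (ℓ : ℝ) ≤ r := by exact_mod_cast Nat.lt_succ_iff.mp (mem_range.mp hℓ)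
    exact summable_thetaTerm hx (by linarith) (by linarith [ℓ.cast_nonneg (α := ℝ)])
      (by linarith) (by linarith)
  have hsum : HasSum (thetaTerm r r t x)
      (∑ ℓ ∈ range (r + 1),
        (r.choose ℓ : ℝ) * x ^ ℓ * Theta ℓ ((r : ℝ) - ℓ) (t + r) x) :=
    (hasSum_sum fun ℓ hℓ => (hasSum_thetaTerm (hterm ℓ hℓ)).mul_left _).congr_fun
      (thetaTerm_eq_sum_choose r t hx)
  exact (hasSum_thetaTerm hsum.summable).unique hsum

theorem stmt16 (r : ℕ) (hr : 2 ≤ r) (x : ℝ) (hx : 0 < x) (t : ℝ) (ht : 1 - (r : ℝ) < t) :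
    Theta r r t x =
      Theta 0 r (t + r) x
        + (∑ ℓ ∈ Finset.Icc 1 (r - 1),
            (r.choose ℓ : ℝ) * x ^ ℓ * Theta ℓ ((r : ℝ) - ℓ) (t + r) x)
        + x ^ (-t) * Theta 0 r (t + r) (1 / x) := by
  have hr1 : 1 ≤ r := by omega
  have hIcc : Icc 1 (r - 1) = Ico 1 r := by ext; simp only [mem_Icc, mem_Ico]; omega
  have hlast : x ^ r * Theta r 0 (t + r) x = x ^ (-t) * Theta 0 r (t + r) (1 / x) := by
    have hr' : (1 : ℝ) ≤ r := by exact_mod_cast hr1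
    rw [Theta_swap hx (summable_thetaTerm hx (by linarith) (by linarith) (by linarith)
      (by linarith)), ← mul_assoc, ← rpow_add hx, neg_add_cancel_left, rpow_natCast]
  rw [Theta_eq_sum_choose r hr1 hx ht, range_eq_Ico, sum_eq_sum_Ico_succ_bot (by omega),
    sum_Ico_succ_top hr1, hIcc]
  simp only [Nat.choose_zero_right, Nat.choose_self, Nat.cast_zero, Nat.cast_one, sub_zero,
    sub_self, pow_zero, one_mul, hlast, add_assoc]
end
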